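/- For all indices h, i, j, k one has K²·S^{hijk} = ((m−2)²/4)·[ (h^{hj}h^{ik} − h^{hk}h^{ij})/(m−1) + (m−1)·U^{hijk} ], where U^{hijk} = ∑_r (a_r^{ij}a^{rhk} − a_r^{ik}a^{rhj}). -/

import Mathlib

open Finset

noncomputable section

/-- `A(p) = ∑ a^{i₁…i_m} p_{i₁}⋯p_{i_m}`, where `m = M + 3 ≥ 3`. -/
def Afun {n M : ℕ} (a : (Fin (M + 3) → Fin n) → ℝ) (p : Fin n → ℝ) : ℝ :=
  ∑ ι : Fin (M + 3) → Fin n, a ι * ∏ t, p (ι t)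

/-- `K(p) = A(p)^{1/m}`. -/
def Kfun {n M : ℕ} (a : (Fin (M + 3) → Fin n) → ℝ) (p : Fin n → ℝ) : ℝ :=
  Afun a p ^ ((1 : ℝ) / (M + 3))

/-- `a^i = (∑ a^{i i₂…i_m} p_{i₂}⋯p_{i_m}) / K^{m-1}`. -/
def aU1 {n M : ℕ} (a : (Fin (M + 3) → Fin n) → ℝ) (i : Fin n) (p : Fin n → ℝ) : ℝ :=
  (∑ ι : Fin (M + 2) → Fin n, a (Fin.cons i ι) * ∏ t, p (ι t)) / Kfun a p ^ (M + 2)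

/-- `a^{ij} = (∑ a^{i j i₃…i_m} p_{i₃}⋯p_{i_m}) / K^{m-2}`. -/
def aU2 {n M : ℕ} (a : (Fin (M + 3) → Fin n) → ℝ) (i j : Fin n) (p : Fin n → ℝ) : ℝ :=
  (∑ ι : Fin (M + 1) → Fin n, a (Fin.cons i (Fin.cons j ι)) * ∏ t, p (ι t)) / Kfun a p ^ (M + 1)

/-- `a^{ijk} = (∑ a^{i j k i₄…i_m} p_{i₄}⋯p_{i_m}) / K^{m-3}`. -/
def aU3 {n M : ℕ} (a : (Fin (M + 3) → Fin n) → ℝ) (i j k : Fin n) (p : Fin n → ℝ) : ℝ :=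
  (∑ ι : Fin M → Fin n, a (Fin.cons i (Fin.cons j (Fin.cons k ι))) * ∏ t, p (ι t)) / Kfun a p ^ M

/-- Partial derivative `∂f/∂p_k` of a function of `p`. -/
def pd {n : ℕ} (f : (Fin n → ℝ) → ℝ) (k : Fin n) (p : Fin n → ℝ) : ℝ :=
  deriv (fun t => f (Function.update p k t)) (p k)

/-- Fundamental metrical d-tensor `g^{ij} = (1/2) ∂²(K²)/∂p_i∂p_j`. -/
def gU {n M : ℕ} (a : (Fin (M + 3) → Fin n) → ℝ) (i j : Fin n) (p : Fin n → ℝ) : ℝ :=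
  (1 / 2 : ℝ) * pd (fun q => pd (fun r => Kfun a r ^ 2) j q) i p

/-- Angular metrical d-tensor `h^{ij} = K ∂²K/∂p_i∂p_j`. -/
def hU {n M : ℕ} (a : (Fin (M + 3) → Fin n) → ℝ) (i j : Fin n) (p : Fin n → ℝ) : ℝ :=
  Kfun a p * pd (fun q => pd (Kfun a) j q) i p

/-- v-torsion d-tensor `C^{ijk} = -(1/2) ∂g^{ij}/∂p_k`. -/
def CU {n M : ℕ} (a : (Fin (M + 3) → Fin n) → ℝ) (i j k : Fin n) (p : Fin n → ℝ) : ℝ :=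
  -(1 / 2 : ℝ) * pd (gU a i j) k p

/-- Symmetry of `a` in all of its `m` indices. -/
def aSym {n M : ℕ} (a : (Fin (M + 3) → Fin n) → ℝ) : Prop :=
  ∀ (σ : Equiv.Perm (Fin (M + 3))) (ι : Fin (M + 3) → Fin n), a (ι ∘ σ) = a ι

/-- `a_i = ∑_s a_{is} a^s`, where `aLow` is the inverse matrix of `(a^{ij})`. -/
def aL {n M : ℕ} (a : (Fin (M + 3) → Fin n) → ℝ) (aLow : Matrix (Fin n) (Fin n) ℝ)
    (p : Fin n → ℝ) (i : Fin n) : ℝ :=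
  ∑ s, aLow i s * aU1 a s p

/-- `a_i^{jk} = ∑_s a_{is} a^{sjk}`. -/
def aL3 {n M : ℕ} (a : (Fin (M + 3) → Fin n) → ℝ) (aLow : Matrix (Fin n) (Fin n) ℝ)
    (p : Fin n → ℝ) (i j k : Fin n) : ℝ :=
  ∑ s, aLow i s * aU3 a s j k p

/-- `g_{ij} = (1/(m-1)) a_{ij} + ((m-2)/(m-1)) a_i a_j`, the inverse of `g^{ij}`. -/
def gL {n M : ℕ} (a : (Fin (M + 3) → Fin n) → ℝ) (aLow : Matrix (Fin n) (Fin n) ℝ)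
    (p : Fin n → ℝ) (i j : Fin n) : ℝ :=
  (1 / (M + 2 : ℝ)) * aLow i j + ((M + 1 : ℝ) / (M + 2)) * aL a aLow p i * aL a aLow p j

/-- v-derivation components `C_i^{jk} = ∑_s g_{is} C^{sjk}`. -/
def CL {n M : ℕ} (a : (Fin (M + 3) → Fin n) → ℝ) (aLow : Matrix (Fin n) (Fin n) ℝ)
    (p : Fin n → ℝ) (i j k : Fin n) : ℝ :=
  ∑ s, gL a aLow p i s * CU a s j k p

/-- v-curvature d-tensor `S^{hijk} = ∑_r (C_r^{ij} C^{rhk} - C_r^{ik} C^{rhj})`. -/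
def Scurv {n M : ℕ} (a : (Fin (M + 3) → Fin n) → ℝ) (aLow : Matrix (Fin n) (Fin n) ℝ)
    (p : Fin n → ℝ) (h i j k : Fin n) : ℝ :=
  ∑ r, (CL a aLow p r i j * CU a r h k p - CL a aLow p r i k * CU a r h j p)

/-- `U^{hijk} = ∑_r (a_r^{ij} a^{rhk} - a_r^{ik} a^{rhj})`. -/
def Ufun {n M : ℕ} (a : (Fin (M + 3) → Fin n) → ℝ) (aLow : Matrix (Fin n) (Fin n) ℝ)
    (p : Fin n → ℝ) (h i j k : Fin n) : ℝ :=
  ∑ r, (aL3 a aLow p r i j * aU3 a r h k p - aL3 a aLow p r i k * aU3 a r h j p)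

/-!
Since `K` is homogeneous of degree one, `∂K/∂p_i = a^i`, `∂a^i/∂p_j = (m-1)(a^{ij} - a^i a^j)/K`
and `∂a^{ij}/∂p_k = (m-2)(a^{ijk} - a^{ij} a^k)/K`. Hence `h^{ij} = (m-1)(a^{ij} - a^i a^j)`,
`g^{ij} = (m-1) a^{ij} - (m-2) a^i a^j` and `C^{ijk} = -(m-1)(m-2)/(2K) · T^{ijk}` with
`T^{ijk} = a^{ijk} - a^{ij}a^k - a^{ik}a^j - a^{jk}a^i + 2 a^i a^j a^k`. Euler's identities give
`a_i = p_i/K` and `p_r T^{rjk} = 0`, so the rank-one part of `g_{ij}` drops out of `C_r^{jk}`,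
and `K² S^{hijk}` is a multiple of `a_{rs} (T^{sij} T^{rhk} - T^{sik} T^{rhj})`. Expanding the
`T`s and contracting with `a_{rs}`, everything except `U^{hijk}` and the products of
`a^{ij} - a^i a^j` cancels by the symmetry of `a^{ijk}`.
-/

namespace HomogeneousForm

variable {n r : ℕ}

def eval (c : (Fin r → Fin n) → ℝ) (p : Fin n → ℝ) : ℝ :=
  ∑ ι, c ι * ∏ t, p (ι t)

def slice (c : (Fin (r + 1) → Fin n) → ℝ) (i : Fin n) : (Fin r → Fin n) → ℝ :=
  fun ι => c (Fin.cons i ι)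

def IsPermInvariant (c : (Fin r → Fin n) → ℝ) : Prop :=
  ∀ (σ : Equiv.Perm (Fin r)) (ι : Fin r → Fin n), c (ι ∘ σ) = c ι

theorem eval_fin_zero (c : (Fin 0 → Fin n) → ℝ) (p : Fin n → ℝ) : eval c p = c Fin.elim0 := by
  simp [eval, Subsingleton.elim _ (Fin.elim0 : Fin 0 → Fin n)]

theorem sum_fin_succ_pi {β : Type*} [AddCommMonoid β] (g : (Fin (r + 1) → Fin n) → β) :
    ∑ ι, g ι = ∑ i, ∑ ι : Fin r → Fin n, g (Fin.cons i ι) := by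
  rw [← Fintype.sum_prod_type']
  exact (Fintype.sum_equiv (Fin.consEquiv fun _ => Fin n) _ _ fun _ => rfl).symm

theorem eval_eq_sum_slice (c : (Fin (r + 1) → Fin n) → ℝ) (p : Fin n → ℝ) :
    eval c p = ∑ i, p i * eval (slice c i) p := by
  simp only [eval, slice, sum_fin_succ_pi, Fin.prod_univ_succ, Fin.cons_zero, Fin.cons_succ,
    Finset.mul_sum]
  exact Finset.sum_congr rfl fun _ _ => Finset.sum_congr rfl fun _ _ => by ring

theorem isPermInvariant_slice {c : (Fin (r + 1) → Fin n) → ℝ} (hc : IsPermInvariant c)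
    (i : Fin n) : IsPermInvariant (slice c i) := by
  intro σ ι
  have h : (Fin.cons i ι : Fin (r + 1) → Fin n) ∘ Equiv.Perm.decomposeFin.symm (0, σ) =
      Fin.cons i (ι ∘ σ) := by
    ext t
    refine Fin.cases ?_ (fun t => ?_) t <;> simp
  rw [slice, slice, ← h, hc]

theorem slice_comm {c : (Fin (r + 2) → Fin n) → ℝ} (hc : IsPermInvariant c)
    (i j : Fin n) : slice (slice c i) j = slice (slice c j) i := by
  funext ι
  have h : (Fin.cons i (Fin.cons j ι) : Fin (r + 2) → Fin n) ∘ Equiv.swap 0 1 =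
      Fin.cons j (Fin.cons i ι) := by
    ext t
    refine Fin.cases ?_ (Fin.cases ?_ fun t => ?_) t
    · simp
    · simp
    · rw [Function.comp_apply, Equiv.swap_apply_of_ne_of_ne (Fin.succ_ne_zero _)]
      · simp
      · simp [Fin.ext_iff]
  rw [slice, slice, slice, slice, ← h, hc]

theorem hasDerivAt_sum_update_mul {g : Fin n → (Fin n → ℝ) → ℝ} {g' : Fin n → ℝ}
    {p : Fin n → ℝ} {k : Fin n}
    (hg : ∀ i, HasDerivAt (fun x => g i (Function.update p k x)) (g' i) (p k)) :
    HasDerivAt (fun x => ∑ i, Function.update p k x i * g i (Function.update p k x))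
      (g k p + ∑ i, p i * g' i) (p k) := by
  have hcoord (i : Fin n) :
      HasDerivAt (fun x => Function.update p k x i) ((Pi.single k 1 : Fin n → ℝ) i) (p k) :=
    hasDerivAt_pi.1 (hasDerivAt_update p k (p k)) i
  refine (HasDerivAt.fun_sum fun i _ => (hcoord i).mul (hg i)).congr_deriv ?_
  simp [Finset.sum_add_distrib, Pi.single_apply]

theorem hasDerivAt_eval_update {c : (Fin (r + 1) → Fin n) → ℝ} (hc : IsPermInvariant c)
    (p : Fin n → ℝ) (k : Fin n) :
    HasDerivAt (fun x => eval c (Function.update p k x)) ((r + 1) * eval (slice c k) p) (p k) := by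
  induction r generalizing p with
  | zero =>
    simp only [eval_eq_sum_slice c, eval_fin_zero]
    simpa using hasDerivAt_sum_update_mul (g := fun i _ => slice c i Fin.elim0) (g' := 0)
      fun i => hasDerivAt_const _ _
  | succ r ih =>
    simp only [eval_eq_sum_slice c]
    refine (hasDerivAt_sum_update_mul fun i => ih (isPermInvariant_slice hc i) p).congr_deriv ?_
    simp only [slice_comm hc _ k, mul_left_comm _ ((r : ℝ) + 1), ← Finset.mul_sum,
      ← eval_eq_sum_slice]
    push_cast
    ring

end HomogeneousForm

open HomogeneousForm

def cartanCubic {ι : Type*} (a1 : ι → ℝ) (a2 : ι → ι → ℝ) (a3 : ι → ι → ι → ℝ) (i j k : ι) : ℝ :=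
  a3 i j k - a2 i j * a1 k - a2 i k * a1 j - a2 j k * a1 i + 2 * a1 i * a1 j * a1 k

theorem sum_mul_cartanCubic {ι : Type*} [Fintype ι] (a1 : ι → ℝ) (a2 : ι → ι → ℝ)
    (a3 : ι → ι → ι → ℝ) (y : ι → ℝ) (j k : ι) :
    ∑ s, y s * cartanCubic a1 a2 a3 s j k = ∑ s, y s * a3 s j k - (∑ s, y s * a2 s j) * a1 k
      - (∑ s, y s * a2 s k) * a1 j - (∑ s, y s * a1 s) * (a2 j k - 2 * a1 j * a1 k) := by
  have expand (s : ι) : y s * cartanCubic a1 a2 a3 s j k = y s * a3 s j k - y s * a2 s j * a1 k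
      - y s * a2 s k * a1 j - y s * a1 s * (a2 j k - 2 * a1 j * a1 k) := by
    unfold cartanCubic; ring
  simp only [expand, Finset.sum_sub_distrib, Finset.sum_mul]

structure EulerRelations {ι : Type*} [Fintype ι] (ℓ a1 : ι → ℝ) (a2 : ι → ι → ℝ)
    (a3 : ι → ι → ι → ℝ) : Prop where
  a2_comm : ∀ i j, a2 i j = a2 j i
  a3_comm12 : ∀ i j k, a3 i j k = a3 j i k
  a3_comm23 : ∀ i j k, a3 i j k = a3 i k j
  sum_a1 : ∑ i, a1 i * ℓ i = 1
  sum_a2 : ∀ i, ∑ j, a2 i j * ℓ j = a1 i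
  sum_a3 : ∀ i j, ∑ k, a3 i j k * ℓ k = a2 i j

namespace EulerRelations

variable {ι : Type*} [Fintype ι] {ℓ a1 : ι → ℝ} {a2 : ι → ι → ℝ} {a3 : ι → ι → ι → ℝ}

theorem a3_comm13 (hE : EulerRelations ℓ a1 a2 a3) (i j k : ι) : a3 i j k = a3 k j i := by
  rw [hE.a3_comm12, hE.a3_comm23, hE.a3_comm12]

theorem sum_ℓ_mul_a1 (hE : EulerRelations ℓ a1 a2 a3) : ∑ s, ℓ s * a1 s = 1 := by
  simpa only [mul_comm] using hE.sum_a1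

theorem sum_ℓ_mul_a2 (hE : EulerRelations ℓ a1 a2 a3) (j : ι) : ∑ s, ℓ s * a2 s j = a1 j := by
  simpa only [mul_comm, hE.a2_comm j] using hE.sum_a2 j

theorem sum_ℓ_mul_a3 (hE : EulerRelations ℓ a1 a2 a3) (j k : ι) :
    ∑ s, ℓ s * a3 s j k = a2 j k := by
  rw [← hE.sum_a3 j k]
  exact Finset.sum_congr rfl fun s _ => by rw [mul_comm, hE.a3_comm12, hE.a3_comm23]

theorem sum_ℓ_mul_cartanCubic (hE : EulerRelations ℓ a1 a2 a3) (j k : ι) :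
    ∑ s, ℓ s * cartanCubic a1 a2 a3 s j k = 0 := by
  simp only [sum_mul_cartanCubic, hE.sum_ℓ_mul_a1, hE.sum_ℓ_mul_a2, hE.sum_ℓ_mul_a3]
  ring

variable [DecidableEq ι] {L : Matrix ι ι ℝ}

theorem sum_L_mul_a2 (hL : L * Matrix.of a2 = 1) (r j : ι) :
    ∑ s, L r s * a2 s j = if r = j then 1 else 0 := by
  simpa [Matrix.mul_apply, Matrix.one_apply] using congrFun (congrFun hL r) j

theorem sum_a2_mul_L (hL : L * Matrix.of a2 = 1) (i s : ι) :
    ∑ r, a2 i r * L r s = if i = s then 1 else 0 := by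
  have hL' : Matrix.of a2 * L = 1 := mul_eq_one_comm.1 hL
  simpa [Matrix.mul_apply, Matrix.one_apply] using congrFun (congrFun hL' i) s

theorem sum_L_mul_a1 (hE : EulerRelations ℓ a1 a2 a3) (hL : L * Matrix.of a2 = 1) (r : ι) :
    ∑ s, L r s * a1 s = ℓ r := by
  simp only [← hE.sum_a2, Finset.mul_sum, ← mul_assoc]
  rw [Finset.sum_comm]
  simp [← Finset.sum_mul, sum_L_mul_a2 hL]

theorem sum_L_mul_mul_a2 (hE : EulerRelations ℓ a1 a2 a3) (hL : L * Matrix.of a2 = 1)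
    (x : ι → ℝ) (h : ι) : ∑ r, (∑ s, L r s * x s) * a2 r h = x h := by
  calc ∑ r, (∑ s, L r s * x s) * a2 r h = ∑ s, (∑ r, a2 h r * L r s) * x s := by
        simp only [Finset.sum_mul, hE.a2_comm _ h]
        rw [Finset.sum_comm]
        exact Finset.sum_congr rfl fun _ _ => Finset.sum_congr rfl fun _ _ => by ring
    _ = x h := by simp [sum_a2_mul_L hL]

theorem sum_L_mul_mul_a1 (hE : EulerRelations ℓ a1 a2 a3) (hL : L * Matrix.of a2 = 1)
    (x : ι → ℝ) : ∑ r, (∑ s, L r s * x s) * a1 r = ∑ s, ℓ s * x s := by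
  have hswap (y : ι → ℝ) : ∑ r, y r * a1 r = ∑ t, (∑ r, y r * a2 r t) * ℓ t := by
    simp only [← hE.sum_a2, Finset.mul_sum, Finset.sum_mul, mul_assoc]
    exact Finset.sum_comm
  rw [hswap]
  exact Finset.sum_congr rfl fun s _ => by rw [sum_L_mul_mul_a2 hE hL, mul_comm]

theorem sum_L_mul_cartanCubic (hE : EulerRelations ℓ a1 a2 a3) (hL : L * Matrix.of a2 = 1)
    (r j k : ι) :
    ∑ s, L r s * cartanCubic a1 a2 a3 s j k = ∑ s, L r s * a3 s j k
      - (if r = j then a1 k else 0) - (if r = k then a1 j else 0)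
      - ℓ r * (a2 j k - 2 * a1 j * a1 k) := by
  simp only [sum_mul_cartanCubic, sum_L_mul_a2 hL, sum_L_mul_a1 hE hL, ite_mul, one_mul, zero_mul]

theorem sum_L_mul_a3_mul_cartanCubic (hE : EulerRelations ℓ a1 a2 a3)
    (hL : L * Matrix.of a2 = 1) (i j h k : ι) :
    ∑ r, (∑ s, L r s * a3 s i j) * cartanCubic a1 a2 a3 r h k =
      ∑ r, (∑ s, L r s * a3 s i j) * a3 r h k - a3 h i j * a1 k - a3 k i j * a1 h
        - a2 i j * (a2 h k - 2 * a1 h * a1 k) := by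
  simp only [sum_mul_cartanCubic, sum_L_mul_mul_a2 hE hL, sum_L_mul_mul_a1 hE hL,
    hE.sum_ℓ_mul_a3]

theorem sum_L_mul_cartanCubic_mul_cartanCubic (hE : EulerRelations ℓ a1 a2 a3)
    (hL : L * Matrix.of a2 = 1) (i j h k : ι) :
    ∑ r, (∑ s, L r s * cartanCubic a1 a2 a3 s i j) * cartanCubic a1 a2 a3 r h k =
      ∑ r, (∑ s, L r s * a3 s i j) * a3 r h k - a3 h i j * a1 k - a3 k i j * a1 h
        - a2 i j * (a2 h k - 2 * a1 h * a1 k)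
        - a1 j * cartanCubic a1 a2 a3 i h k - a1 i * cartanCubic a1 a2 a3 j h k := by
  have expand (r : ι) :
      (∑ s, L r s * cartanCubic a1 a2 a3 s i j) * cartanCubic a1 a2 a3 r h k =
        (∑ s, L r s * a3 s i j) * cartanCubic a1 a2 a3 r h k
        - (if r = i then a1 j * cartanCubic a1 a2 a3 r h k else 0)
        - (if r = j then a1 i * cartanCubic a1 a2 a3 r h k else 0)
        - (a2 i j - 2 * a1 i * a1 j) * (ℓ r * cartanCubic a1 a2 a3 r h k) := by
    rw [sum_L_mul_cartanCubic hE hL]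
    split_ifs <;> ring
  simp only [expand, Finset.sum_sub_distrib, Finset.sum_ite_eq', Finset.mem_univ, if_true,
    ← Finset.mul_sum, hE.sum_ℓ_mul_cartanCubic, sum_L_mul_a3_mul_cartanCubic hE hL]
  ring

theorem sum_L_mul_cartanCubic_antisymm (hE : EulerRelations ℓ a1 a2 a3)
    (hL : L * Matrix.of a2 = 1) (h i j k : ι) :
    ∑ r, ((∑ s, L r s * cartanCubic a1 a2 a3 s i j) * cartanCubic a1 a2 a3 r h k
        - (∑ s, L r s * cartanCubic a1 a2 a3 s i k) * cartanCubic a1 a2 a3 r h j) =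
      (a2 h j - a1 h * a1 j) * (a2 i k - a1 i * a1 k)
        - (a2 h k - a1 h * a1 k) * (a2 i j - a1 i * a1 j)
        + ∑ r, ((∑ s, L r s * a3 s i j) * a3 r h k - (∑ s, L r s * a3 s i k) * a3 r h j) := by
  rw [Finset.sum_sub_distrib, Finset.sum_sub_distrib, sum_L_mul_cartanCubic_mul_cartanCubic hE hL,
    sum_L_mul_cartanCubic_mul_cartanCubic hE hL]
  unfold cartanCubic
  rw [hE.a3_comm12 i h j, hE.a3_comm12 i h k, hE.a3_comm13 j i k, hE.a3_comm13 k h j,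
    hE.a2_comm i h, hE.a2_comm j h, hE.a2_comm k h, hE.a2_comm k j]
  ring

end EulerRelations

section MthRootMetric

variable {n M : ℕ} {a : (Fin (M + 3) → Fin n) → ℝ} {p : Fin n → ℝ}

def scaledEval (a : (Fin (M + 3) → Fin n) → ℝ) {r : ℕ} (c : (Fin r → Fin n) → ℝ)
    (p : Fin n → ℝ) : ℝ :=
  eval c p / Kfun a p ^ r

theorem Kfun_pos (hA : 0 < Afun a p) : 0 < Kfun a p :=
  Real.rpow_pos_of_pos hA _

theorem Kfun_pow (hA : 0 < Afun a p) : Kfun a p ^ (M + 3) = Afun a p := by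
  rw [Kfun, ← Real.rpow_natCast, ← Real.rpow_mul hA.le]
  push_cast
  rw [one_div_mul_cancel (by positivity), Real.rpow_one]

theorem hasDerivAt_Afun (hsym : aSym a) (p : Fin n → ℝ) (k : Fin n) :
    HasDerivAt (fun x => Afun a (Function.update p k x)) ((M + 3) * eval (slice a k) p) (p k) := by
  refine (hasDerivAt_eval_update (r := M + 2) hsym p k).congr_deriv ?_
  push_cast
  ring

theorem hasDerivAt_Kfun (hsym : aSym a) (hA : 0 < Afun a p) (k : Fin n) :
    HasDerivAt (fun x => Kfun a (Function.update p k x)) (aU1 a k p) (p k) := by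
  have hK := Kfun_pos hA
  have h := (hasDerivAt_Afun hsym p k).rpow_const (p := 1 / (M + 3 : ℝ))
    (by rw [Function.update_eq_self]; exact Or.inl hA.ne')
  rw [Function.update_eq_self, Real.rpow_sub_one hA.ne'] at h
  refine h.congr_deriv ?_
  change _ = eval (slice a k) p / Kfun a p ^ (M + 2)
  rw [← Kfun, ← Kfun_pow hA]
  field_simp
  ring

theorem hasDerivAt_scaledEval (hsym : aSym a) (hA : 0 < Afun a p) {r : ℕ}
    {c : (Fin (r + 1) → Fin n) → ℝ} (hc : IsPermInvariant c) (k : Fin n) :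
    HasDerivAt (fun x => scaledEval a c (Function.update p k x))
      ((r + 1) * (scaledEval a (slice c k) p - scaledEval a c p * aU1 a k p) / Kfun a p) (p k) := by
  have hK := Kfun_pos hA
  have h := (hasDerivAt_eval_update hc p k).fun_div ((hasDerivAt_Kfun hsym hA k).fun_pow (r + 1))
    (by rw [Function.update_eq_self]; positivity)
  rw [Function.update_eq_self] at h
  refine h.congr_deriv ?_
  unfold scaledEval
  field_simp
  push_cast
  ring

theorem sum_scaledEval_slice_mul (hA : 0 < Afun a p) {r : ℕ} (c : (Fin (r + 1) → Fin n) → ℝ) :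
    ∑ i, scaledEval a (slice c i) p * (p i / Kfun a p) = scaledEval a c p := by
  have hK := Kfun_pos hA
  simp only [scaledEval, eval_eq_sum_slice c, div_mul_div_comm, ← Finset.sum_div]
  field_simp
  rw [pow_succ, Finset.mul_sum, Finset.sum_mul]
  exact Finset.sum_congr rfl fun _ _ => by ring

theorem scaledEval_self (hA : 0 < Afun a p) : scaledEval a a p = 1 := by
  rw [scaledEval, Kfun_pow hA]
  exact div_self hA.ne'

theorem pd_eq_of_hasDerivAt (hsym : aSym a) (hA : 0 < Afun a p) {F G : (Fin n → ℝ) → ℝ}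
    {G' : ℝ} {k : Fin n} (hFG : ∀ q, 0 < Afun a q → F q = G q)
    (hG : HasDerivAt (fun x => G (Function.update p k x)) G' (p k)) : pd F k p = G' := by
  have hpos : ∀ᶠ x in nhds (p k), 0 < Afun a (Function.update p k x) :=
    continuousAt_const.eventually_lt (hasDerivAt_Afun hsym p k).continuousAt
      (by rwa [Function.update_eq_self])
  exact (hG.congr_of_eventuallyEq (hpos.mono fun x hx => hFG _ hx)).deriv

theorem aU2_comm (hsym : aSym a) (i j : Fin n) : aU2 a i j p = aU2 a j i p := by
  change scaledEval a (slice (slice a i) j) p = scaledEval a (slice (slice a j) i) p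
  rw [slice_comm hsym]

theorem eulerRelations (hsym : aSym a) (hA : 0 < Afun a p) :
    EulerRelations (fun i => p i / Kfun a p) (fun i => aU1 a i p) (fun i j => aU2 a i j p)
      (fun i j k => aU3 a i j k p) where
  a2_comm := aU2_comm hsym
  a3_comm12 i j k := by
    change scaledEval a (slice (slice (slice a i) j) k) p =
      scaledEval a (slice (slice (slice a j) i) k) p
    rw [slice_comm hsym]
  a3_comm23 i j k := by
    change scaledEval a (slice (slice (slice a i) j) k) p =
      scaledEval a (slice (slice (slice a i) k) j) p
    rw [slice_comm (isPermInvariant_slice hsym i)]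
  sum_a1 := (sum_scaledEval_slice_mul hA a).trans (scaledEval_self hA)
  sum_a2 i := sum_scaledEval_slice_mul hA (slice a i)
  sum_a3 i j := sum_scaledEval_slice_mul hA (slice (slice a i) j)

end MthRootMetric

section CartanTensors

variable {n M : ℕ} {a : (Fin (M + 3) → Fin n) → ℝ} {p : Fin n → ℝ}

local notation "𝒯" =>
  cartanCubic (fun i => aU1 a i p) (fun i j => aU2 a i j p) (fun i j k => aU3 a i j k p)

theorem aU1_eq_scaledEval (i : Fin n) : aU1 a i p = scaledEval a (slice a i) p := rfl

theorem aU2_eq_scaledEval (i j : Fin n) : aU2 a i j p = scaledEval a (slice (slice a i) j) p :=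
  rfl

theorem hasDerivAt_aU1 (hsym : aSym a) (hA : 0 < Afun a p) (i k : Fin n) :
    HasDerivAt (fun x => aU1 a i (Function.update p k x))
      ((M + 2) * (aU2 a i k p - aU1 a i p * aU1 a k p) / Kfun a p) (p k) := by
  refine (hasDerivAt_scaledEval hsym hA (isPermInvariant_slice hsym i) k).congr_deriv ?_
  simp only [aU1_eq_scaledEval, aU2_eq_scaledEval]
  push_cast
  ring

theorem hasDerivAt_aU2 (hsym : aSym a) (hA : 0 < Afun a p) (i j k : Fin n) :
    HasDerivAt (fun x => aU2 a i j (Function.update p k x))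
      ((M + 1) * (aU3 a i j k p - aU2 a i j p * aU1 a k p) / Kfun a p) (p k) :=
  hasDerivAt_scaledEval hsym hA (isPermInvariant_slice (isPermInvariant_slice hsym i) j) k

theorem hU_eq (hsym : aSym a) (hA : 0 < Afun a p) (i j : Fin n) :
    hU a i j p = (M + 2) * (aU2 a i j p - aU1 a i p * aU1 a j p) := by
  rw [hU, pd_eq_of_hasDerivAt hsym hA (F := pd (Kfun a) j)
    (fun q hq => (hasDerivAt_Kfun hsym hq j).deriv)
    (hasDerivAt_aU1 hsym hA j i), aU2_comm hsym j]
  field_simp [(Kfun_pos hA).ne']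

theorem gU_eq (hsym : aSym a) (hA : 0 < Afun a p) (i j : Fin n) :
    gU a i j p = (M + 2) * aU2 a i j p - (M + 1) * aU1 a i p * aU1 a j p := by
  have hsq (q : Fin n → ℝ) (hq : 0 < Afun a q) :
      pd (fun r => Kfun a r ^ 2) j q = 2 * Kfun a q * aU1 a j q := by
    refine (((hasDerivAt_Kfun hsym hq j).fun_pow 2).congr_deriv ?_).deriv
    rw [Function.update_eq_self]
    ring
  rw [gU, pd_eq_of_hasDerivAt hsym hA hsq
    (((hasDerivAt_Kfun hsym hA i).const_mul 2).mul (hasDerivAt_aU1 hsym hA j i)), aU2_comm hsym j]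
  simp only [Function.update_eq_self]
  field_simp [(Kfun_pos hA).ne']
  ring

theorem CU_eq (hsym : aSym a) (hA : 0 < Afun a p) (i j k : Fin n) :
    CU a i j k p = -((M + 2) * (M + 1) / (2 * Kfun a p)) * 𝒯 i j k := by
  rw [CU, pd_eq_of_hasDerivAt hsym hA (fun q hq => gU_eq hsym hq i j)
    (((hasDerivAt_aU2 hsym hA i j k).const_mul _).sub
      (((hasDerivAt_aU1 hsym hA i k).const_mul _).mul (hasDerivAt_aU1 hsym hA j k)))]
  unfold cartanCubic
  simp only [Function.update_eq_self]
  field_simp [(Kfun_pos hA).ne']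
  ring

variable {aLow : Matrix (Fin n) (Fin n) ℝ}

theorem CL_eq (hsym : aSym a) (hA : 0 < Afun a p)
    (hL : aLow * (Matrix.of fun i j => aU2 a i j p) = 1) (r j k : Fin n) :
    CL a aLow p r j k = -((M + 1) / (2 * Kfun a p)) * ∑ s, aLow r s * 𝒯 s j k := by
  have hE := eulerRelations hsym hA
  have hK := (Kfun_pos hA).ne'
  have expand (s : Fin n) : gL a aLow p r s * CU a s j k p =
      -((M + 1) / (2 * Kfun a p)) * (aLow r s * 𝒯 s j k)
        - ((M + 1) ^ 2 / (2 * Kfun a p)) * (p r / Kfun a p) * (p s / Kfun a p * 𝒯 s j k) := by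
    rw [gL, aL, aL, hE.sum_L_mul_a1 hL, hE.sum_L_mul_a1 hL, CU_eq hsym hA]
    field_simp
    ring
  rw [CL]
  simp only [expand, Finset.sum_sub_distrib, ← Finset.mul_sum, hE.sum_ℓ_mul_cartanCubic]
  ring

theorem Kfun_sq_mul_Scurv (hsym : aSym a) (hA : 0 < Afun a p)
    (hL : aLow * (Matrix.of fun i j => aU2 a i j p) = 1) (h i j k : Fin n) :
    Kfun a p ^ 2 * Scurv a aLow p h i j k = ((M + 2) * (M + 1) ^ 2 / 4) *
      ∑ r, ((∑ s, aLow r s * 𝒯 s i j) * 𝒯 r h k - (∑ s, aLow r s * 𝒯 s i k) * 𝒯 r h j) := by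
  have hK := (Kfun_pos hA).ne'
  rw [Scurv, Finset.mul_sum, Finset.mul_sum]
  refine Finset.sum_congr rfl fun r _ => ?_
  rw [CL_eq hsym hA hL, CL_eq hsym hA hL, CU_eq hsym hA, CU_eq hsym hA]
  field_simp
  ring

end CartanTensors

theorem stmt_9_general {n M : ℕ} (a : (Fin (M + 3) → Fin n) → ℝ)
    (hsym : aSym a) (p : Fin n → ℝ) (hA : 0 < Afun a p)
    (aLow : Matrix (Fin n) (Fin n) ℝ)
    (hInv₂ : aLow * (Matrix.of fun i j => aU2 a i j p) = 1) :
    ∀ h i j k : Fin n,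
      Kfun a p ^ 2 * Scurv a aLow p h i j k =
        ((M + 1 : ℝ) ^ 2 / 4) *
          ((hU a h j p * hU a i k p - hU a h k p * hU a i j p) / (M + 2) +
            (M + 2 : ℝ) * Ufun a aLow p h i j k) := by
  intro h i j k
  rw [Kfun_sq_mul_Scurv hsym hA hInv₂,
    (eulerRelations hsym hA).sum_L_mul_cartanCubic_antisymm hInv₂, hU_eq hsym hA,
    hU_eq hsym hA, hU_eq hsym hA, hU_eq hsym hA]
  unfold Ufun aL3
  field_simp

/-- `K² S^{hijk} = ((m-2)²/4) [(h^{hj}h^{ik} - h^{hk}h^{ij})/(m-1)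
+ (m-1) U^{hijk}]`, where `m = M + 3`. -/
theorem stmt_9 {n M : ℕ} (hn : 4 ≤ n) (a : (Fin (M + 3) → Fin n) → ℝ)
    (hsym : aSym a) (p : Fin n → ℝ) (hA : 0 < Afun a p)
    (aLow : Matrix (Fin n) (Fin n) ℝ)
    (hInv₁ : (Matrix.of fun i j => aU2 a i j p) * aLow = 1)
    (hInv₂ : aLow * (Matrix.of fun i j => aU2 a i j p) = 1) :
    ∀ h i j k : Fin n,
      Kfun a p ^ 2 * Scurv a aLow p h i j k =
        ((M + 1 : ℝ) ^ 2 / 4) *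
          ((hU a h j p * hU a i k p - hU a h k p * hU a i j p) / (M + 2) +
            (M + 2 : ℝ) * Ufun a aLow p h i j k) :=
  stmt_9_general a hsym p hA aLow hInv₂
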